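/- Let (X, ≤, τ) be a compact partially ordered topological space and let P be a closed subgroup of H₊(X), the group of all order-preserving homeomorphisms of X with the compact-open topology τ_co. Then τ_co restricted to P is minimal within the class of π-uniform topologies on P; that is, every Hausdorff group topology σ on P which is coarser than τ_co and for which the natural evaluation action (P, σ) × X → X is π-uniform (with respect to the unique compatible uniformity on X) coincides with τ_co. -/

import Mathlib

/-!
If an ultrafilter on `P` converges to `p₀` for `σ`, π-uniformity at `p₀` and at `p₀⁻¹` makes the
maps `p` and `p⁻¹` eventually uniformly equicontinuous along it. On the compact space `X` their
pointwise limits are then uniform limits, continuous and mutually inverse: the ultrafilter converges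
in the compact-open topology to a homeomorphism `H`, which lies in `P` because `P` is closed. As `σ`
is coarser and Hausdorff, `H = p₀`. So every `σ`-convergent ultrafilter converges to the same point
in the compact-open topology, which forces `σ = τ_co`.
-/

open scoped Topology

/-- The group of self-homeomorphisms of `X`, with composition as multiplication:
`(f * g) x = f (g x)`, identity `Homeomorph.refl` and inverse `Homeomorph.symm`. -/
instance homeoGroup (X : Type*) [TopologicalSpace X] : Group (X ≃ₜ X) where
  mul f g := g.trans f
  one := Homeomorph.refl X
  inv := Homeomorph.symm
  mul_assoc f g h := rfl
  one_mul f := rfl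
  mul_one f := rfl
  inv_mul_cancel f := by ext x; exact f.symm_apply_apply x

/-- The compact-open topology on the homeomorphism group `H(X)`, induced from the
compact-open topology on `C(X, X)`. -/
def coTop (X : Type*) [TopologicalSpace X] : TopologicalSpace (X ≃ₜ X) :=
  TopologicalSpace.induced (fun f : X ≃ₜ X => (f : C(X, X))) ContinuousMap.compactOpen

/-- The unique uniformity compatible with the topology of a compact Hausdorff space. -/
def cptUnif (X : Type*) [TopologicalSpace X] [CompactSpace X] [T2Space X] :
    Filter (X × X) :=
  @uniformity X uniformSpaceOfCompactR1

/-- An action `act` of a group `G` equipped with a topology `σ` on a set `X` equipped with a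
uniformity (filter) `𝔅` is *π-uniform* if for every `g₀ ∈ G` and every entourage `ε ∈ 𝔅`
there exist an entourage `δ ∈ 𝔅` and a neighborhood `U` of `g₀` such that
`(g • x, g • y) ∈ ε` whenever `(x, y) ∈ δ` and `g ∈ U`. -/
def IsPiUniform {G X : Type*} (σ : TopologicalSpace G) (𝔅 : Filter (X × X))
    (act : G → X → X) : Prop :=
  ∀ g₀ : G, ∀ ε ∈ 𝔅, ∃ δ ∈ 𝔅, ∃ U ∈ @nhds G σ g₀,
    ∀ g ∈ U, ∀ x y : X, (x, y) ∈ δ → (act g x, act g y) ∈ ε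

/-- The group `H₊(X)` of all order-preserving homeomorphisms (order-automorphisms) of an
ordered topological space `X`, as a subgroup of the homeomorphism group `H(X)`. -/
def Hplus (X : Type*) [TopologicalSpace X] [PartialOrder X] : Subgroup (X ≃ₜ X) where
  carrier := {f : X ≃ₜ X | ∀ x y : X, x ≤ y ↔ f x ≤ f y}
  one_mem' := fun _ _ => Iff.rfl
  mul_mem' := by
    intro a b ha hb x y
    exact (hb x y).trans (ha (b x) (b y))
  inv_mem' := by
    intro a ha x y
    have := ha (a.symm x) (a.symm y)
    simpa using this.symm

open Filter Topology Uniformity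

section EventuallyUniformEquicontinuous

variable {ι α β : Type*} [UniformSpace α] [UniformSpace β]

/-- For every entourage `ε` there is an entourage `δ` such that eventually along `𝓕`, every
`F i` maps `δ`-close points to `ε`-close points. -/
def EventuallyUniformEquicontinuous (𝓕 : Filter ι) (F : ι → α → β) : Prop :=
  Tendsto (fun q : ι × α × α => (F q.1 q.2.1, F q.1 q.2.2)) (𝓕 ×ˢ 𝓤 α) (𝓤 β)

variable {𝓕 : Filter ι} {F : ι → α → β} {f : α → β}

theorem EventuallyUniformEquicontinuous.comp_tendsto {κ : Type*} {𝓖 : Filter κ} {g : κ → ι}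
    (hF : EventuallyUniformEquicontinuous 𝓕 F) (hg : Tendsto g 𝓖 𝓕) :
    EventuallyUniformEquicontinuous 𝓖 (F ∘ g) :=
  hF.comp (hg.prodMap tendsto_id)

theorem EventuallyUniformEquicontinuous.uniformContinuous_of_tendsto [𝓕.NeBot]
    (hF : EventuallyUniformEquicontinuous 𝓕 F) (hf : ∀ x, Tendsto (F · x) 𝓕 (𝓝 (f x))) :
    UniformContinuous f := by
  refine uniformity_hasBasis_closed.tendsto_right_iff.2 fun ε ⟨hε, hεc⟩ => ?_
  obtain ⟨A, hA, δ, hδ, hAδ⟩ := mem_prod_iff.1 (hF hε)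
  filter_upwards [hδ] with xy hxy
  exact hεc.mem_of_tendsto ((hf xy.1).prodMk_nhds (hf xy.2))
    (mem_of_superset hA fun i hi => hAδ (Set.mk_mem_prod hi hxy))

theorem EventuallyUniformEquicontinuous.tendsto_prod_nhds
    (hF : EventuallyUniformEquicontinuous 𝓕 F) (hf : ∀ x, Tendsto (F · x) 𝓕 (𝓝 (f x))) (x : α) :
    Tendsto (fun q : ι × α => F q.1 q.2) (𝓕 ×ˢ 𝓝 x) (𝓝 (f x)) := by
  have hnear : Tendsto (fun y => (x, y)) (𝓝 x) (𝓤 α) := Uniform.tendsto_nhds_right.1 tendsto_id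
  exact Uniform.tendsto_nhds_right.2 <|
    ((Uniform.tendsto_nhds_right.1 (hf x)).comp tendsto_fst).uniformity_trans
      (hF.comp (tendsto_id.prodMap hnear))

theorem EventuallyUniformEquicontinuous.tendsto_apply
    (hF : EventuallyUniformEquicontinuous 𝓕 F) (hf : ∀ x, Tendsto (F · x) 𝓕 (𝓝 (f x)))
    {c : ι → α} {z : α} (hc : Tendsto c 𝓕 (𝓝 z)) :
    Tendsto (fun i => F i (c i)) 𝓕 (𝓝 (f z)) :=
  (hF.tendsto_prod_nhds hf z).comp (tendsto_id.prodMk hc)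

theorem EventuallyUniformEquicontinuous.tendstoUniformly [CompactSpace α] [𝓕.NeBot]
    (hF : EventuallyUniformEquicontinuous 𝓕 F) (hf : ∀ x, Tendsto (F · x) 𝓕 (𝓝 (f x))) :
    TendstoUniformly F f 𝓕 := by
  refine tendstoLocallyUniformly_iff_tendstoUniformly_of_compactSpace.1 <|
    tendstoLocallyUniformly_iff_forall_tendsto.2 fun x => ?_
  have hfx : Tendsto (fun y => (f y, f x)) (𝓝 x) (𝓤 β) :=
    Uniform.tendsto_nhds_left.1 ((hF.uniformContinuous_of_tendsto hf).continuous.tendsto x)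
  exact (hfx.comp tendsto_snd).uniformity_trans
    (Uniform.tendsto_nhds_right.1 (hF.tendsto_prod_nhds hf x))
theorem EventuallyUniformEquicontinuous.leftInverse_of_tendsto [T2Space β] [𝓕.NeBot]
    {F' : ι → β → α} {f' : β → α} (hF : EventuallyUniformEquicontinuous 𝓕 F)
    (hf : ∀ x, Tendsto (F · x) 𝓕 (𝓝 (f x))) (hf' : ∀ y, Tendsto (F' · y) 𝓕 (𝓝 (f' y)))
    (hinv : ∀ i, Function.LeftInverse (F i) (F' i)) :
    Function.LeftInverse f f' := fun y =>
  tendsto_nhds_unique (hF.tendsto_apply hf (hf' y))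
    (tendsto_const_nhds.congr fun i => (hinv i y).symm)

end EventuallyUniformEquicontinuous

theorem eq_of_le_of_forall_ultrafilter_le_nhds {α : Type*} {σ τ : TopologicalSpace α}
    [@T2Space α σ] (hle : τ ≤ σ)
    (h : ∀ (a : α) (G : Ultrafilter α), ↑G ≤ @nhds α σ a → ∃ b, ↑G ≤ @nhds α τ b) : σ = τ := by
  refine le_antisymm ((le_iff_nhds _ _).2 fun a => le_iff_ultrafilter.2 fun G hG => ?_) hle
  obtain ⟨b, hb⟩ := h a G hG
  obtain rfl : b = a := @tendsto_nhds_unique _ _ σ _ id G b a _ (hb.trans (nhds_mono hle)) hG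
  exact hb

theorem IsPiUniform.eventuallyUniformEquicontinuous_nhds {G X : Type*} [TopologicalSpace G]
    [UniformSpace X] {act : G → X → X} (h : IsPiUniform ‹_› (𝓤 X) act) (g₀ : G) :
    EventuallyUniformEquicontinuous (𝓝 g₀) act := fun ε hε => by
  obtain ⟨δ, hδ, U, hU, hUδ⟩ := h g₀ ε hε
  exact mem_map.2 <| mem_of_superset (prod_mem_prod hU hδ) fun q hq => hUδ q.1 hq.1 _ _ hq.2

theorem exists_homeomorph_tendstoUniformly {ι X : Type*} [UniformSpace X] [CompactSpace X]
    [T2Space X] (G : Ultrafilter ι) {φ : ι → X ≃ₜ X}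
    (hφ : EventuallyUniformEquicontinuous (G : Filter ι) fun i => ⇑(φ i))
    (hφsymm : EventuallyUniformEquicontinuous (G : Filter ι) fun i => ⇑(φ i).symm) :
    ∃ H : X ≃ₜ X, TendstoUniformly (fun i => ⇑(φ i)) H G := by
  have hlim (F : ι → X → X) (x : X) : ∃ y, Tendsto (F · x) G (𝓝 y) :=
    let ⟨y, _, hy⟩ := isCompact_univ.ultrafilter_le_nhds (G.map (F · x)) (by simp)
    ⟨y, hy⟩
  choose f hf using hlim fun i => φ i
  choose g hg using hlim fun i => (φ i).symm
  let H : X ≃ₜ X :=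
    { toFun := f
      invFun := g
      left_inv := hφsymm.leftInverse_of_tendsto hg hf fun i => (φ i).symm_apply_apply
      right_inv := hφ.leftInverse_of_tendsto hf hg fun i => (φ i).apply_symm_apply
      continuous_toFun := (hφ.uniformContinuous_of_tendsto hf).continuous
      continuous_invFun := (hφsymm.uniformContinuous_of_tendsto hg).continuous }
  exact ⟨H, hφ.tendstoUniformly hf⟩

theorem tendsto_coTop_iff_tendstoUniformly {ι X : Type*} [UniformSpace X] [CompactSpace X]
    {𝓕 : Filter ι} {φ : ι → X ≃ₜ X} {H : X ≃ₜ X} :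
    Tendsto φ 𝓕 (@nhds _ (coTop X) H) ↔ TendstoUniformly (fun i => ⇑(φ i)) H 𝓕 := by
  rw [coTop, nhds_induced, tendsto_comap_iff]
  exact ContinuousMap.tendsto_iff_tendstoUniformly

theorem compactOpen_minimal_piUniform_orderHomeos {X : Type*}
    [TopologicalSpace X] [CompactSpace X] [T2Space X]
    (P : Subgroup (X ≃ₜ X))
    (hPclosed : IsClosed[coTop X] (P : Set (X ≃ₜ X)))
    (σ : TopologicalSpace ↥P)
    (hσgrp : @IsTopologicalGroup ↥P σ _) (hσT2 : @T2Space ↥P σ)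
    (hcoarse : TopologicalSpace.induced (Subtype.val : ↥P → X ≃ₜ X) (coTop X) ≤ σ)
    (hπ : IsPiUniform σ (cptUnif X) (fun (p : ↥P) (x : X) => (p : X ≃ₜ X) x)) :
    σ = TopologicalSpace.induced (Subtype.val : ↥P → X ≃ₜ X) (coTop X) := by
  let : UniformSpace X := uniformSpaceOfCompactR1
  let : TopologicalSpace (X ≃ₜ X) := coTop X
  let := σ
  have hF := hπ.eventuallyUniformEquicontinuous_nhds
  refine eq_of_le_of_forall_ultrafilter_le_nhds hcoarse fun p₀ G hG => ?_
  obtain ⟨H, hH⟩ := exists_homeomorph_tendstoUniformly G ((hF p₀).comp_tendsto hG)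
    ((hF p₀⁻¹).comp_tendsto ((continuous_inv.tendsto p₀).mono_left hG))
  have hco : Tendsto (fun p : P => (p : X ≃ₜ X)) G (𝓝 H) :=
    tendsto_coTop_iff_tendstoUniformly.2 hH
  have hHP : H ∈ P := hPclosed.mem_of_tendsto hco (.of_forall fun p => p.2)
  exact ⟨⟨H, hHP⟩, by rw [nhds_induced]; exact hco.le_comap⟩
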